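/- Let n ≥ 1 be an integer, z ∈ ℂⁿ with z ≠ 0, and λ ∈ ℝ with 0 ≤ λ < 1. Then for all ξ, η ∈ ℂⁿ, the quantity Σ_{k,j,i,q=1}^n R_{kj̄iq̄}(z,λ)·ξ^k·conj(ξ^j)·η^i·conj(η^q) is a nonnegative real number; i.e., the metric ω_λ has non-negative holomorphic bisectional curvature. -/

import Mathlib

open Finset ComplexConjugate

/-- `|z|² = Σₘ |zᵐ|²` for `z ∈ ℂⁿ`. -/
noncomputable def zsq {n : ℕ} (z : Fin n → ℂ) : ℝ := ∑ m, Complex.normSq (z m)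

/-- The Chern curvature tensor `R_{kj̄iq̄}(z,λ)` of the Hermitian metric `ω_λ`
(Lemma 2.1 of the paper). -/
noncomputable def Rten {n : ℕ} (z : Fin n → ℂ) (lam : ℝ) (k j i q : Fin n) : ℂ :=
  (if i = q then 1 else 0)
      * ((if j = k then ((zsq z : ℝ) : ℂ) else 0) - conj (z k) * z j) / ((zsq z : ℝ) : ℂ) ^ 3
    + (lam : ℂ) * ((if i = j then ((zsq z : ℝ) : ℂ) else 0) - conj (z i) * z j)
        * ((if k = q then ((zsq z : ℝ) : ℂ) else 0) - conj (z k) * z q) / ((zsq z : ℝ) : ℂ) ^ 4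
    + ((lam ^ 2 - 2 * lam : ℝ) : ℂ) * conj (z i) * z q
        * ((if k = j then ((zsq z : ℝ) : ℂ) else 0) - conj (z k) * z j) / ((zsq z : ℝ) : ℂ) ^ 4

lemma cs_aux (n : ℕ) (a b : Fin n → ℂ) :
    Complex.normSq (∑ m, conj (a m) * b m)
      ≤ (∑ m, Complex.normSq (a m)) * (∑ m, Complex.normSq (b m)) := by
  have h1 : ‖∑ m, conj (a m) * b m‖ ≤ ∑ m, ‖a m‖ * ‖b m‖ := by
    refine (norm_sum_le _ _).trans (le_of_eq ?_)
    simp [norm_mul]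
  have h2 := Finset.sum_mul_sq_le_sq_mul_sq Finset.univ (fun m => ‖a m‖)
      (fun m => ‖b m‖)
  have h3 : ‖∑ m, conj (a m) * b m‖ ^ 2
      ≤ (∑ m, ‖a m‖ * ‖b m‖) ^ 2 := by
    have := norm_nonneg (∑ m, conj (a m) * b m)
    nlinarith [h1]
  calc Complex.normSq (∑ m, conj (a m) * b m)
      = ‖∑ m, conj (a m) * b m‖ ^ 2 := (Complex.sq_norm _).symm
    _ ≤ (∑ m, ‖a m‖ * ‖b m‖) ^ 2 := h3
    _ ≤ (∑ m, ‖a m‖ ^ 2) * (∑ m, ‖b m‖ ^ 2) := h2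
    _ = (∑ m, Complex.normSq (a m)) * (∑ m, Complex.normSq (b m)) := by
        simp [Complex.sq_norm]

lemma Dplain {n : ℕ} (C : ℂ) (w : Fin n → ℂ) : ∑ x, C * w x = C * ∑ x, w x :=
  (Finset.mul_sum _ _ _).symm

lemma Done {n : ℕ} (i : Fin n) (C : ℂ) (w : Fin n → ℂ) :
    ∑ x, C * ((if i = x then (1:ℂ) else 0) * w x) = C * w i := by
  rw [Dplain]; congr 1; simp [ite_mul, Finset.sum_ite_eq]

lemma Dsecond {n : ℕ} (k : Fin n) (c a C : ℂ) (u w : Fin n → ℂ) :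
    ∑ x, C * (((if k = x then c else 0) - a * u x) * w x)
      = C * (c * w k - a * ∑ x, u x * w x) := by
  rw [Dplain]; congr 1
  simp [sub_mul, Finset.sum_sub_distrib, ite_mul, Finset.sum_ite_eq, Finset.mul_sum, mul_assoc]

lemma Dfirst {n : ℕ} (k : Fin n) (c a C : ℂ) (u w : Fin n → ℂ) :
    ∑ x, C * (((if x = k then c else 0) - a * u x) * w x)
      = C * (c * w k - a * ∑ x, u x * w x) := by
  rw [Dplain]; congr 1
  simp [sub_mul, Finset.sum_sub_distrib, ite_mul, Finset.sum_ite_eq', Finset.mul_sum, mul_assoc]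

lemma Dlin2 {n : ℕ} (A B C : ℂ) (f g : Fin n → ℂ) :
    ∑ x, C * (A * f x - B * g x) = C * (A * ∑ x, f x - B * ∑ x, g x) := by
  rw [Dplain]; congr 1
  simp [Finset.sum_sub_distrib, Finset.mul_sum]

lemma key (n : ℕ) (z ξ η : Fin n → ℂ) (lam : ℝ) :
    ∑ k, ∑ j, ∑ i, ∑ q, Rten z lam k j i q * ξ k * conj (ξ j) * η i * conj (η q)
      = ((∑ m, η m * conj (η m)) / ((zsq z : ℝ) : ℂ) ^ 3) * (((zsq z : ℝ) : ℂ) * (∑ m, ξ m * conj (ξ m)) - (∑ m, z m * conj (ξ m)) * (∑ m, conj (z m) * ξ m))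
        + ((lam : ℂ) * (((zsq z : ℝ) : ℂ) * (∑ m, η m * conj (ξ m)) - (∑ m, conj (z m) * η m) * (∑ m, z m * conj (ξ m))) / ((zsq z : ℝ) : ℂ) ^ 4) * (((zsq z : ℝ) : ℂ) * (∑ m, ξ m * conj (η m)) - (∑ m, z m * conj (η m)) * (∑ m, conj (z m) * ξ m))
        + (((lam ^ 2 - 2 * lam : ℝ) : ℂ) * (∑ m, conj (z m) * η m) * (∑ m, z m * conj (η m)) / ((zsq z : ℝ) : ℂ) ^ 4) * (((zsq z : ℝ) : ℂ) * (∑ m, ξ m * conj (ξ m)) - (∑ m, z m * conj (ξ m)) * (∑ m, conj (z m) * ξ m)) := by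
  have st1 : ∀ k j i : Fin n,
      ∑ q, Rten z lam k j i q * ξ k * conj (ξ j) * η i * conj (η q)
        = (((if j = k then ((zsq z : ℝ) : ℂ) else 0) - conj (z k) * z j) * ξ k * conj (ξ j) * η i / ((zsq z : ℝ) : ℂ) ^ 3)
              * conj (η i)
          + ((lam : ℂ) * ((if i = j then ((zsq z : ℝ) : ℂ) else 0) - conj (z i) * z j) * ξ k * conj (ξ j) * η i
                / ((zsq z : ℝ) : ℂ) ^ 4) * (((zsq z : ℝ) : ℂ) * conj (η k) - conj (z k) * (∑ m, z m * conj (η m)))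
          + (((lam ^ 2 - 2 * lam : ℝ) : ℂ) * conj (z i) * ((if k = j then ((zsq z : ℝ) : ℂ) else 0) - conj (z k) * z j) * ξ k * conj (ξ j)
                * η i / ((zsq z : ℝ) : ℂ) ^ 4) * (∑ m, z m * conj (η m)) := by
    intro k j i
    calc ∑ q, Rten z lam k j i q * ξ k * conj (ξ j) * η i * conj (η q)
        = ∑ q, ((((if j = k then ((zsq z : ℝ) : ℂ) else 0) - conj (z k) * z j) * ξ k * conj (ξ j) * η i / ((zsq z : ℝ) : ℂ) ^ 3)
              * ((if i = q then (1:ℂ) else 0) * conj (η q))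
          + ((lam : ℂ) * ((if i = j then ((zsq z : ℝ) : ℂ) else 0) - conj (z i) * z j) * ξ k * conj (ξ j) * η i
                / ((zsq z : ℝ) : ℂ) ^ 4) * (((if k = q then ((zsq z : ℝ) : ℂ) else 0) - conj (z k) * z q) * conj (η q))
          + (((lam ^ 2 - 2 * lam : ℝ) : ℂ) * conj (z i) * ((if k = j then ((zsq z : ℝ) : ℂ) else 0) - conj (z k) * z j) * ξ k * conj (ξ j)
                * η i / ((zsq z : ℝ) : ℂ) ^ 4) * (z q * conj (η q))) :=
          Finset.sum_congr rfl fun q _ => by simp only [Rten]; ring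
      _ = _ := by
          rw [Finset.sum_add_distrib, Finset.sum_add_distrib, Done, Dsecond, Dplain]
  have st2 : ∀ k j : Fin n,
      (∑ i, ((((if j = k then ((zsq z : ℝ) : ℂ) else 0) - conj (z k) * z j) * ξ k * conj (ξ j) * η i / ((zsq z : ℝ) : ℂ) ^ 3)
              * conj (η i)
          + ((lam : ℂ) * ((if i = j then ((zsq z : ℝ) : ℂ) else 0) - conj (z i) * z j) * ξ k * conj (ξ j) * η i
                / ((zsq z : ℝ) : ℂ) ^ 4) * (((zsq z : ℝ) : ℂ) * conj (η k) - conj (z k) * (∑ m, z m * conj (η m)))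
          + (((lam ^ 2 - 2 * lam : ℝ) : ℂ) * conj (z i) * ((if k = j then ((zsq z : ℝ) : ℂ) else 0) - conj (z k) * z j) * ξ k * conj (ξ j)
                * η i / ((zsq z : ℝ) : ℂ) ^ 4) * (∑ m, z m * conj (η m))))
        = (((if j = k then ((zsq z : ℝ) : ℂ) else 0) - conj (z k) * z j) * ξ k * conj (ξ j) / ((zsq z : ℝ) : ℂ) ^ 3) * (∑ m, η m * conj (η m))
          + ((lam : ℂ) * ξ k * conj (ξ j) * (((zsq z : ℝ) : ℂ) * conj (η k) - conj (z k) * (∑ m, z m * conj (η m))) / ((zsq z : ℝ) : ℂ) ^ 4)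
              * (((zsq z : ℝ) : ℂ) * η j - z j * (∑ m, conj (z m) * η m))
          + (((lam ^ 2 - 2 * lam : ℝ) : ℂ) * ((if k = j then ((zsq z : ℝ) : ℂ) else 0) - conj (z k) * z j) * ξ k * conj (ξ j) * (∑ m, z m * conj (η m))
                / ((zsq z : ℝ) : ℂ) ^ 4) * (∑ m, conj (z m) * η m) := by
    intro k j
    calc _ = ∑ i, ((((if j = k then ((zsq z : ℝ) : ℂ) else 0) - conj (z k) * z j) * ξ k * conj (ξ j) / ((zsq z : ℝ) : ℂ) ^ 3)
              * (η i * conj (η i))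
          + ((lam : ℂ) * ξ k * conj (ξ j) * (((zsq z : ℝ) : ℂ) * conj (η k) - conj (z k) * (∑ m, z m * conj (η m))) / ((zsq z : ℝ) : ℂ) ^ 4)
              * (((if i = j then ((zsq z : ℝ) : ℂ) else 0) - z j * conj (z i)) * η i)
          + (((lam ^ 2 - 2 * lam : ℝ) : ℂ) * ((if k = j then ((zsq z : ℝ) : ℂ) else 0) - conj (z k) * z j) * ξ k * conj (ξ j) * (∑ m, z m * conj (η m))
                / ((zsq z : ℝ) : ℂ) ^ 4) * (conj (z i) * η i)) :=
          Finset.sum_congr rfl fun i _ => by ring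
      _ = _ := by
          rw [Finset.sum_add_distrib, Finset.sum_add_distrib, Dplain, Dfirst, Dplain]
  have st3 : ∀ k : Fin n,
      (∑ j, ((((if j = k then ((zsq z : ℝ) : ℂ) else 0) - conj (z k) * z j) * ξ k * conj (ξ j) / ((zsq z : ℝ) : ℂ) ^ 3) * (∑ m, η m * conj (η m))
          + ((lam : ℂ) * ξ k * conj (ξ j) * (((zsq z : ℝ) : ℂ) * conj (η k) - conj (z k) * (∑ m, z m * conj (η m))) / ((zsq z : ℝ) : ℂ) ^ 4)
              * (((zsq z : ℝ) : ℂ) * η j - z j * (∑ m, conj (z m) * η m))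
          + (((lam ^ 2 - 2 * lam : ℝ) : ℂ) * ((if k = j then ((zsq z : ℝ) : ℂ) else 0) - conj (z k) * z j) * ξ k * conj (ξ j) * (∑ m, z m * conj (η m))
                / ((zsq z : ℝ) : ℂ) ^ 4) * (∑ m, conj (z m) * η m)))
        = (ξ k * (∑ m, η m * conj (η m)) / ((zsq z : ℝ) : ℂ) ^ 3) * (((zsq z : ℝ) : ℂ) * conj (ξ k) - conj (z k) * (∑ m, z m * conj (ξ m)))
          + ((lam : ℂ) * ξ k * (((zsq z : ℝ) : ℂ) * conj (η k) - conj (z k) * (∑ m, z m * conj (η m))) / ((zsq z : ℝ) : ℂ) ^ 4)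
              * (((zsq z : ℝ) : ℂ) * (∑ m, η m * conj (ξ m)) - (∑ m, conj (z m) * η m) * (∑ m, z m * conj (ξ m)))
          + (((lam ^ 2 - 2 * lam : ℝ) : ℂ) * ξ k * (∑ m, conj (z m) * η m) * (∑ m, z m * conj (η m)) / ((zsq z : ℝ) : ℂ) ^ 4) * (((zsq z : ℝ) : ℂ) * conj (ξ k) - conj (z k) * (∑ m, z m * conj (ξ m))) := by
    intro k
    calc _ = ∑ j, ((ξ k * (∑ m, η m * conj (η m)) / ((zsq z : ℝ) : ℂ) ^ 3)
              * (((if j = k then ((zsq z : ℝ) : ℂ) else 0) - conj (z k) * z j) * conj (ξ j))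
          + ((lam : ℂ) * ξ k * (((zsq z : ℝ) : ℂ) * conj (η k) - conj (z k) * (∑ m, z m * conj (η m))) / ((zsq z : ℝ) : ℂ) ^ 4)
              * (((zsq z : ℝ) : ℂ) * (η j * conj (ξ j)) - (∑ m, conj (z m) * η m) * (z j * conj (ξ j)))
          + (((lam ^ 2 - 2 * lam : ℝ) : ℂ) * ξ k * (∑ m, conj (z m) * η m) * (∑ m, z m * conj (η m)) / ((zsq z : ℝ) : ℂ) ^ 4)
              * (((if k = j then ((zsq z : ℝ) : ℂ) else 0) - conj (z k) * z j) * conj (ξ j))) :=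
          Finset.sum_congr rfl fun j _ => by ring
      _ = _ := by
          rw [Finset.sum_add_distrib, Finset.sum_add_distrib, Dfirst, Dlin2, Dsecond]
  have st4 :
      (∑ k, ((ξ k * (∑ m, η m * conj (η m)) / ((zsq z : ℝ) : ℂ) ^ 3) * (((zsq z : ℝ) : ℂ) * conj (ξ k) - conj (z k) * (∑ m, z m * conj (ξ m)))
          + ((lam : ℂ) * ξ k * (((zsq z : ℝ) : ℂ) * conj (η k) - conj (z k) * (∑ m, z m * conj (η m))) / ((zsq z : ℝ) : ℂ) ^ 4)
              * (((zsq z : ℝ) : ℂ) * (∑ m, η m * conj (ξ m)) - (∑ m, conj (z m) * η m) * (∑ m, z m * conj (ξ m)))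
          + (((lam ^ 2 - 2 * lam : ℝ) : ℂ) * ξ k * (∑ m, conj (z m) * η m) * (∑ m, z m * conj (η m)) / ((zsq z : ℝ) : ℂ) ^ 4) * (((zsq z : ℝ) : ℂ) * conj (ξ k) - conj (z k) * (∑ m, z m * conj (ξ m)))))
        = ((∑ m, η m * conj (η m)) / ((zsq z : ℝ) : ℂ) ^ 3) * (((zsq z : ℝ) : ℂ) * (∑ m, ξ m * conj (ξ m)) - (∑ m, z m * conj (ξ m)) * (∑ m, conj (z m) * ξ m))
          + ((lam : ℂ) * (((zsq z : ℝ) : ℂ) * (∑ m, η m * conj (ξ m)) - (∑ m, conj (z m) * η m) * (∑ m, z m * conj (ξ m))) / ((zsq z : ℝ) : ℂ) ^ 4) * (((zsq z : ℝ) : ℂ) * (∑ m, ξ m * conj (η m)) - (∑ m, z m * conj (η m)) * (∑ m, conj (z m) * ξ m))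
          + (((lam ^ 2 - 2 * lam : ℝ) : ℂ) * (∑ m, conj (z m) * η m) * (∑ m, z m * conj (η m)) / ((zsq z : ℝ) : ℂ) ^ 4) * (((zsq z : ℝ) : ℂ) * (∑ m, ξ m * conj (ξ m)) - (∑ m, z m * conj (ξ m)) * (∑ m, conj (z m) * ξ m)) := by
    calc _ = ∑ k, (((∑ m, η m * conj (η m)) / ((zsq z : ℝ) : ℂ) ^ 3)
              * (((zsq z : ℝ) : ℂ) * (ξ k * conj (ξ k)) - (∑ m, z m * conj (ξ m)) * (conj (z k) * ξ k))
          + ((lam : ℂ) * (((zsq z : ℝ) : ℂ) * (∑ m, η m * conj (ξ m)) - (∑ m, conj (z m) * η m) * (∑ m, z m * conj (ξ m))) / ((zsq z : ℝ) : ℂ) ^ 4)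
              * (((zsq z : ℝ) : ℂ) * (ξ k * conj (η k)) - (∑ m, z m * conj (η m)) * (conj (z k) * ξ k))
          + (((lam ^ 2 - 2 * lam : ℝ) : ℂ) * (∑ m, conj (z m) * η m) * (∑ m, z m * conj (η m)) / ((zsq z : ℝ) : ℂ) ^ 4)
              * (((zsq z : ℝ) : ℂ) * (ξ k * conj (ξ k)) - (∑ m, z m * conj (ξ m)) * (conj (z k) * ξ k))) :=
          Finset.sum_congr rfl fun k _ => by ring
      _ = _ := by
          rw [Finset.sum_add_distrib, Finset.sum_add_distrib, Dlin2, Dlin2, Dlin2]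
  calc ∑ k, ∑ j, ∑ i, ∑ q, Rten z lam k j i q * ξ k * conj (ξ j) * η i * conj (η q)
      = _ := Finset.sum_congr rfl fun k _ => Finset.sum_congr rfl fun j _ =>
          Finset.sum_congr rfl fun i _ => st1 k j i
    _ = _ := Finset.sum_congr rfl fun k _ => Finset.sum_congr rfl fun j _ => st2 k j
    _ = _ := Finset.sum_congr rfl fun k _ => st3 k
    _ = _ := st4

/-- Lemma 2.2: For `z ≠ 0` and `0 ≤ λ < 1`, for all `ξ, η ∈ ℂⁿ` the
quantity `Σ R_{kj̄iq̄}(z,λ) ξᵏ ξ̄ʲ ηⁱ η̄ᑫ` is a nonnegative real number; i.e. `ω_λ` has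
non-negative holomorphic bisectional curvature. -/
theorem bisectional_nonneg (n : ℕ) (hn : 1 ≤ n) (z : Fin n → ℂ) (hz : z ≠ 0)
    (lam : ℝ) (hlam0 : 0 ≤ lam) (hlam1 : lam < 1) (ξ η : Fin n → ℂ) :
    ∃ r : ℝ, 0 ≤ r ∧
      ∑ k, ∑ j, ∑ i, ∑ q, Rten z lam k j i q * ξ k * conj (ξ j) * η i * conj (η q)
        = (r : ℂ) := by
  have hkey := key n z ξ η lam
  -- conjugate identifications
  have hPp : (∑ m, z m * conj (ξ m)) = conj (∑ m, conj (z m) * ξ m) := by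
    rw [map_sum]
    exact Finset.sum_congr rfl fun m _ => by rw [map_mul, Complex.conj_conj]
  have hQp : (∑ m, z m * conj (η m)) = conj (∑ m, conj (z m) * η m) := by
    rw [map_sum]
    exact Finset.sum_congr rfl fun m _ => by rw [map_mul, Complex.conj_conj]
  have hTp : (∑ m, η m * conj (ξ m)) = conj (∑ m, ξ m * conj (η m)) := by
    rw [map_sum]
    exact Finset.sum_congr rfl fun m _ => by rw [map_mul, Complex.conj_conj]; ring
  have hX : (∑ m, ξ m * conj (ξ m)) = ((∑ m, Complex.normSq (ξ m) : ℝ) : ℂ) := by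
    push_cast
    exact Finset.sum_congr rfl fun m _ => Complex.mul_conj _

  have hY : (∑ m, η m * conj (η m)) = ((∑ m, Complex.normSq (η m) : ℝ) : ℂ) := by
    push_cast
    exact Finset.sum_congr rfl fun m _ => Complex.mul_conj _

  set Xr := ∑ m, Complex.normSq (ξ m) with hXr_def
  set Yr := ∑ m, Complex.normSq (η m) with hYr_def
  set nP := Complex.normSq (∑ m, conj (z m) * ξ m) with hnP_def
  set nQ := Complex.normSq (∑ m, conj (z m) * η m) with hnQ_def
  set nW := Complex.normSq (((zsq z : ℝ) : ℂ) * (∑ m, ξ m * conj (η m)) - (∑ m, conj (z m) * ξ m) * conj (∑ m, conj (z m) * η m)) with hnW_def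
  refine ⟨((zsq z * Xr - nP) * Yr) / (zsq z) ^ 3 + lam * nW / (zsq z) ^ 4
      + (lam ^ 2 - 2 * lam) * nQ * (zsq z * Xr - nP) / (zsq z) ^ 4, ?_, ?_⟩
  · -- nonnegativity
    obtain ⟨m0, hm0⟩ : ∃ m, z m ≠ 0 := Function.ne_iff.1 hz
    have hSr : 0 < zsq z := by
      rw [zsq]
      exact Finset.sum_pos' (fun m _ => Complex.normSq_nonneg _)
        ⟨m0, Finset.mem_univ m0, Complex.normSq_pos.2 hm0⟩
    have hYr : 0 ≤ Yr := Finset.sum_nonneg fun m _ => Complex.normSq_nonneg _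
    have hCS1 : nP ≤ zsq z * Xr := by
      simpa [zsq, hXr_def, hnP_def] using cs_aux n z ξ
    have hCS2 : nQ ≤ zsq z * Yr := by
      simpa [zsq, hYr_def, hnQ_def] using cs_aux n z η
    have hA : 0 ≤ zsq z * Xr - nP := sub_nonneg.2 hCS1
    have hform : ((zsq z * Xr - nP) * Yr) / (zsq z) ^ 3 + lam * nW / (zsq z) ^ 4
        + (lam ^ 2 - 2 * lam) * nQ * (zsq z * Xr - nP) / (zsq z) ^ 4
        = ((zsq z * Xr - nP) * Yr * zsq z + lam * nW
            + (lam ^ 2 - 2 * lam) * nQ * (zsq z * Xr - nP)) / (zsq z) ^ 4 := by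
      field_simp
    rw [hform]
    apply div_nonneg _ (by positivity)
    nlinarith [mul_nonneg hA (sub_nonneg.2 hCS2),
      mul_nonneg (mul_nonneg hA (Complex.normSq_nonneg (∑ m, conj (z m) * η m))) (sq_nonneg (1 - lam)),
      mul_nonneg hlam0 (Complex.normSq_nonneg (((zsq z : ℝ) : ℂ) * (∑ m, ξ m * conj (η m)) - (∑ m, conj (z m) * ξ m) * conj (∑ m, conj (z m) * η m)))]
  · -- the sum equals the real number
    rw [hkey, hPp, hQp, hTp, hX, hY]
    have e1 : conj (∑ m, conj (z m) * ξ m) * (∑ m, conj (z m) * ξ m) = ((nP : ℝ) : ℂ) := by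
      rw [mul_comm, Complex.mul_conj]
    have e2 : (∑ m, conj (z m) * η m) * conj (∑ m, conj (z m) * η m) = ((nQ : ℝ) : ℂ) := Complex.mul_conj _
    have e3 : (((zsq z : ℝ) : ℂ) * conj (∑ m, ξ m * conj (η m)) - (∑ m, conj (z m) * η m) * conj (∑ m, conj (z m) * ξ m)) * (((zsq z : ℝ) : ℂ) * (∑ m, ξ m * conj (η m)) - conj (∑ m, conj (z m) * η m) * (∑ m, conj (z m) * ξ m))
        = ((nW : ℝ) : ℂ) := by
      have hc : ((zsq z : ℝ) : ℂ) * conj (∑ m, ξ m * conj (η m)) - (∑ m, conj (z m) * η m) * conj (∑ m, conj (z m) * ξ m) = conj (((zsq z : ℝ) : ℂ) * (∑ m, ξ m * conj (η m)) - (∑ m, conj (z m) * ξ m) * conj (∑ m, conj (z m) * η m)) := by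
        rw [map_sub, map_mul, map_mul, Complex.conj_conj, Complex.conj_ofReal]
        ring
      rw [hc, hnW_def, ← Complex.mul_conj]
      ring
    push_cast
    rw [← e1, ← e2, ← e3] <;> try rfl
    ring
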